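/- Limiting case (ii) of the dropout energy: if r^(n) ~ p^(S_d)(ρ_n) with ρ_n → 0, then the scaled expectation -[M / E(Σ_i r_i^(n))] · E_{r^(n)} E_{θ̃~q}[log p(r^(n)θ + (1-r^(n))θ̃, D)] converges to the structured energy U^(S)(θ) = -Σ_{i=1}^M E_{θ̃~q}[log p(θ_i, θ̃_{¬i}, D)]. -/

import Mathlib

/-!
Writing `|r|` for the number of active coordinates of a mask, the dropout pmf factors
as `p(r; ρ) = ρ / (1 - (1 - ρ)^M) · ρ^(|r| - 1) (1 - ρ)^(M - |r|)`. The normalising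
factor cancels in the scaled expectation, which becomes a ratio of two polynomials in `ρ`.
At `ρ = 0` the weight `ρ^(|r| - 1) (1 - ρ)^(M - |r|)` is the indicator of `|r| = 1`, so
the numerator tends to `Σ_i f(e_i)` and the denominator to `Σ_i |e_i| = M`.
-/

open Filter
section
open Finset

variable {ι : Type*} [Fintype ι]

lemma card_filter_pos_of_ne {r : ι → Bool} (hr : r ≠ fun _ => false) : 0 < #{j | r j} := by
  obtain ⟨j, hj⟩ := Function.ne_iff.mp hr
  exact card_pos.mpr ⟨j, by simpa using hj⟩

variable [DecidableEq ι]

lemma card_filter_eq_one_iff (r : ι → Bool) :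
    #{j | r j} = 1 ↔ ∃ i, r = fun j => decide (j = i) := by
  simp only [card_eq_one, Finset.ext_iff, funext_iff, mem_filter, mem_univ, true_and, mem_singleton]
  simp only [Bool.eq_iff_iff (b := decide _), decide_eq_true_eq]

lemma sum_ite_card_eq_one (g : (ι → Bool) → ℝ) :
    ∑ r, (if #{j | r j} = 1 then g r else 0) = ∑ i, g (fun j => decide (j = i)) := by
  have himage : ({r | #{j | r j} = 1} : Finset (ι → Bool)) =
      univ.image (fun i j => decide (j = i)) := by
    ext r
    simp only [mem_filter, mem_univ, true_and, mem_image, card_filter_eq_one_iff]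
    exact exists_congr fun i => eq_comm
  rw [← sum_filter, himage, sum_image]
  intro i _ i' _ h
  simpa using congrFun h i

-- `k - 1` truncates at `k = 0`; only `k ≥ 1` (masks `r ≠ 0`) ever occurs.
def dropoutWeight (M : ℕ) (x : ℝ) (k : ℕ) : ℝ := x ^ (k - 1) * (1 - x) ^ (M - k)

lemma dropoutWeight_zero (M : ℕ) {k : ℕ} (hk : 0 < k) :
    dropoutWeight M 0 k = if k = 1 then 1 else 0 := by
  unfold dropoutWeight
  split_ifs with h
  · simp [h]
  · simp [zero_pow (show k - 1 ≠ 0 by omega)]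

lemma continuous_dropoutWeight (M k : ℕ) : Continuous fun x => dropoutWeight M x k := by
  unfold dropoutWeight; fun_prop

lemma sum_ne_false_dropoutWeight_zero (M : ℕ) (g : (ι → Bool) → ℝ) :
    ∑ r with r ≠ fun _ => false, dropoutWeight M 0 #{j | r j} * g r =
      ∑ i, g (fun j => decide (j = i)) := by
  rw [← sum_ite_card_eq_one, sum_filter]
  refine sum_congr rfl fun r _ => ?_
  by_cases hr : r = fun _ => false
  · simp [hr]
  · rw [if_pos hr, dropoutWeight_zero M (card_filter_pos_of_ne hr)]
    split_ifs <;> simp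

lemma tendsto_sum_ne_false_dropoutWeight (M : ℕ) (g : (ι → Bool) → ℝ) {ρ : ℕ → ℝ}
    (hρ : Tendsto ρ atTop (nhds 0)) :
    Tendsto (fun n => ∑ r with r ≠ fun _ => false, dropoutWeight M (ρ n) #{j | r j} * g r)
      atTop (nhds (∑ i, g (fun j => decide (j = i)))) := by
  rw [← sum_ne_false_dropoutWeight_zero M g]
  exact tendsto_finsetSum _ fun r _ =>
    (((continuous_dropoutWeight M _).tendsto 0).comp hρ).mul_const _

lemma sum_ne_false_mul_eq_dropoutWeight (M : ℕ) {x : ℝ} {p : (ι → Bool) → ℝ}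
    (hp : ∀ r, p r = x ^ #{j | r j} * (1 - x) ^ (M - #{j | r j}) / (1 - (1 - x) ^ M))
    (g : (ι → Bool) → ℝ) :
    ∑ r with r ≠ fun _ => false, p r * g r = x / (1 - (1 - x) ^ M) *
      ∑ r with r ≠ fun _ => false, dropoutWeight M x #{j | r j} * g r := by
  rw [mul_sum]
  refine sum_congr rfl fun r hr => ?_
  rw [hp, dropoutWeight, ← mul_pow_sub_one (card_filter_pos_of_ne (mem_filter.mp hr).2).ne']
  ring

end

lemma neg_div_mul_mul_cancel_left {a : ℝ} (ha : a ≠ 0) (m u v : ℝ) :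
    -(m / (a * u)) * (a * v) = -(m * v / u) := by
  rw [neg_mul, div_mul_eq_mul_div, mul_left_comm, mul_div_mul_left _ _ ha]

open Set

/-- Limiting case (ii) of the dropout energy: with
`f(r) = E_{θ̃~q}[log p(rθ + (1-r)θ̃, D)]` (finite on the finite support
`R = {0,1}^M \ {0}`), masks `r^(n) ~ p^(S_d)(ρ_n)` and `ρ_n → 0`, the scaled
expectation `-(M / E[Σ_i r_i^(n)]) · E_{r^(n)}[f(r^(n))]` converges to the
structured energy `U^(S)(θ) = -Σ_i f(e_i)`. -/
theorem stmt12 (M : ℕ) (hM : 1 ≤ M) (f : (Fin M → Bool) → ℝ)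
    (p : ℝ → (Fin M → Bool) → ℝ)
    (hp : ∀ ρ ∈ Ioo (0:ℝ) 1, ∀ r : Fin M → Bool,
      p ρ r = ρ ^ ((Finset.univ.filter (fun j => r j = true)).card)
        * (1 - ρ) ^ (M - (Finset.univ.filter (fun j => r j = true)).card)
        / (1 - (1 - ρ) ^ M))
    (ρ : ℕ → ℝ) (hρ : ∀ n, ρ n ∈ Ioo (0:ℝ) 1)
    (hρ0 : Tendsto ρ atTop (nhds 0)) :
    Tendsto
      (fun n =>
        -((M : ℝ) /
            (∑ r ∈ Finset.univ.filter
                (fun r : Fin M → Bool => r ≠ fun _ => false),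
              p (ρ n) r *
                ((Finset.univ.filter (fun j => r j = true)).card : ℝ)))
          * (∑ r ∈ Finset.univ.filter
                (fun r : Fin M → Bool => r ≠ fun _ => false),
              p (ρ n) r * f r))
      atTop (nhds (-∑ i : Fin M, f fun j => decide (j = i))) := by
  have hM0 : (M : ℝ) ≠ 0 := Nat.cast_ne_zero.mpr (by omega)
  have hnum := (tendsto_sum_ne_false_dropoutWeight M f hρ0).const_mul (M : ℝ)
  have hden := tendsto_sum_ne_false_dropoutWeight M
    (fun r : Fin M → Bool => ((Finset.univ.filter (fun j => r j = true)).card : ℝ)) hρ0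
  have hcard :
      ∑ i : Fin M, ((Finset.univ.filter (fun j => decide (j = i) = true)).card : ℝ) = M := by
    simp [Finset.filter_eq']
  rw [hcard] at hden
  have hlim := (hnum.div hden hM0).neg
  rw [mul_div_cancel_left₀ _ hM0] at hlim
  refine hlim.congr fun n => ?_
  obtain ⟨hpos, hlt⟩ := hρ n
  have hnorm : 1 - (1 - ρ n) ^ M ≠ 0 :=
    (sub_pos.mpr (pow_lt_one₀ (by linarith) (by linarith) (by omega))).ne'
  rw [sum_ne_false_mul_eq_dropoutWeight M (hp _ (hρ n)),
    sum_ne_false_mul_eq_dropoutWeight M (hp _ (hρ n)),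
    neg_div_mul_mul_cancel_left (div_ne_zero hpos.ne' hnorm)]
  rfl
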